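/- arXiv:2605.04244 — 2 statements merged into one kernel-verified Lean document; each statement's English description precedes it below -/
import Mathlib

section
/- In the decomposition algorithm with parameter d > 1, suppose a refined segment [b_c, j] is appended to RS[c] at column j, and the right endpoint of the most recently appended segment in RS[c'] is strictly less than j, where c' = φ_j(c). Then [b_c, j] overlaps strictly fewer than d refined segments currently in RS[c']. -/
/-- `Partitions L x y`: the list `L` of (nonempty, sorted, consecutive) integer
intervals partitions `[x, y]`. -/
def Partitions : List (ℕ × ℕ) → ℕ → ℕ → Prop
  | [], x, y => y + 1 = x
  | (b, e) :: t, x, y => b = x ∧ b ≤ e ∧ Partitions t (e + 1) y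

/-- Number of intervals in `L` overlapping (nonempty intersection with) `[b, e]`. -/
def overlapCnt (b e : ℕ) (L : List (ℕ × ℕ)) : ℕ :=
  (L.filter (fun p => decide (p.1 ≤ e ∧ b ≤ p.2))).length

/-!
If `[b, j]` met at least `d` segments of `RS[c']`, let `p` be the `d`-th of them from the left.
Then `b ≤ p.2 < j`, and at column `p.2` the segment `p` is already present, so the state of
`RS[c']` there is the prefix of the current one ending at or after `p`; the later segments start
after `p.2`, hence `[b, p.2]` met exactly `d` segments at column `p.2`, and an Active Split would
have fired there.
-/

theorem overlapCnt_cons (b e : ℕ) (a : ℕ × ℕ) (L : List (ℕ × ℕ)) :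
    overlapCnt b e (a :: L) = overlapCnt b e L + if a.1 ≤ e ∧ b ≤ a.2 then 1 else 0 := by
  unfold overlapCnt
  split_ifs with h <;> simp [h]

theorem overlapCnt_append (b e : ℕ) (L R : List (ℕ × ℕ)) :
    overlapCnt b e (L ++ R) = overlapCnt b e L + overlapCnt b e R := by
  simp [overlapCnt, List.filter_append]

namespace Partitions

variable {L R : List (ℕ × ℕ)} {x y z : ℕ}

theorem le_succ (h : Partitions L x y) : x ≤ y + 1 := by
  induction L generalizing x with
  | nil => exact (h : y + 1 = x).ge
  | cons a t ih =>
    obtain ⟨rfl, ha, ht⟩ := h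
    have := ih ht
    omega

theorem bounds (h : Partitions L x y) {p : ℕ × ℕ} (hp : p ∈ L) :
    x ≤ p.1 ∧ p.1 ≤ p.2 ∧ p.2 ≤ y := by
  induction L generalizing x with
  | nil => simp at hp
  | cons a t ih =>
    obtain ⟨rfl, ha, ht⟩ := h
    rcases List.mem_cons.mp hp with rfl | hp
    · have := ht.le_succ
      omega
    · have := ih ht hp
      omega

theorem of_append (h : Partitions (L ++ R) x z) (hL : Partitions L x y) :
    Partitions R (y + 1) z := by
  induction L generalizing x with
  | nil =>
    obtain rfl : y + 1 = x := hL
    exact h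
  | cons a t ih => exact ih h.2.2 hL.2.2

theorem overlapCnt_eq_zero (h : Partitions L x y) {b e : ℕ} (he : e < x) :
    overlapCnt b e L = 0 := by
  refine List.length_eq_zero_iff.mpr (List.filter_eq_nil_iff.mpr fun p hp => ?_)
  have := h.bounds hp
  simp only [decide_eq_true_eq, not_and]
  omega

theorem overlapCnt_append_eq (h : Partitions (L ++ R) x z) (hL : Partitions L x y)
    {b e : ℕ} (he : e ≤ y) : overlapCnt b e (L ++ R) = overlapCnt b e L := by
  rw [overlapCnt_append, (h.of_append hL).overlapCnt_eq_zero (by omega), add_zero]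

/-- Take `p` to be the `d`-th segment meeting `[b, e]`. -/
theorem exists_overlapCnt_eq (h : Partitions L x y) {b e d : ℕ} (hd : 0 < d)
    (hde : d ≤ overlapCnt b e L) : ∃ p ∈ L, b ≤ p.2 ∧ overlapCnt b p.2 L = d := by
  induction L generalizing x d with
  | nil => simp only [overlapCnt, List.filter_nil, List.length_nil] at hde; omega
  | cons a t ih =>
    have hxe : x ≤ e := by
      by_contra! hex
      rw [h.overlapCnt_eq_zero hex] at hde
      omega
    obtain ⟨a1, a2⟩ := a
    obtain ⟨rfl, ha, ht⟩ := h
    rw [overlapCnt_cons] at hde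
    by_cases hba : b ≤ a2
    · simp only [hxe, hba, and_self, if_true] at hde
      rcases Nat.lt_or_ge 1 d with hd1 | hd1
      · obtain ⟨p, hp, hbp, hcnt⟩ := ih ht (d := d - 1) (by omega) (by omega)
        have := ht.bounds hp
        refine ⟨p, List.mem_cons_of_mem _ hp, hbp, ?_⟩
        rw [overlapCnt_cons, hcnt, if_pos ⟨by omega, hba⟩]
        omega
      · refine ⟨(a1, a2), List.mem_cons_self, hba, ?_⟩
        rw [overlapCnt_cons, ht.overlapCnt_eq_zero (Nat.lt_succ_self a2), if_pos ⟨ha, hba⟩]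
        omega
    · simp only [hba, and_false, if_false, add_zero] at hde
      obtain ⟨p, hp, hbp, hcnt⟩ := ih ht hd hde
      refine ⟨p, List.mem_cons_of_mem _ hp, hbp, ?_⟩
      simp [overlapCnt_cons, hcnt, hba]

end Partitions

/-- `A t` models `RS[c']` at column `t` (with `c' = φ_t(c)` constant on `[b, j]`), and `htrig`
encodes that no Active Split was triggered on `[b, j']` for `b ≤ j' < j`. -/
theorem stmt8_general (d b j : ℕ) (A : ℕ → List (ℕ × ℕ)) (y : ℕ → ℕ)
    (hpart : ∀ t, Partitions (A t) 1 (y t))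
    (hpre : ∀ t t', t ≤ t' → A t <+: A t')
    (happ : ∀ t, ∀ p ∈ A t, p ∈ A p.2)
    (hd : 1 < d)
    (hlast : ∀ p ∈ A j, p.2 < j)
    (htrig : ∀ j', b ≤ j' → j' < j → overlapCnt b j' (A j') ≠ d) :
    overlapCnt b j (A j) < d := by
  by_contra! hcnt
  obtain ⟨p, hpL, hbp, hcnt_p⟩ := (hpart j).exists_overlapCnt_eq (by omega) hcnt
  have hpj : p.2 < j := hlast p hpL
  obtain ⟨R, hR⟩ := hpre p.2 j hpj.le
  have hp_le : p.2 ≤ y p.2 := ((hpart p.2).bounds (happ j p hpL)).2.2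
  refine htrig p.2 hbp hpj ?_
  have hpart_j : Partitions (A p.2 ++ R) 1 (y j) := hR ▸ hpart j
  rwa [← hR, hpart_j.overlapCnt_append_eq (hpart p.2) hp_le] at hcnt_p

/-- Lemma (ending before `j`).  `A t` is the state of `RS[c']`
(`c' = φ_t(c)`, constant on `[b, j]`) at column `t`, partitioning a prefix
`[1, y t]` with `y t ≤ t`; earlier states are prefixes of later ones and every
segment is present at the column of its right endpoint.  Suppose the refined
segment `[b, j]` is appended to `RS[c]` at column `j` (so by disjointness no
Active Split was triggered earlier on `[b, ·]`: the trigger hypothesis `htrig`),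
and the right endpoint of every (in particular the most recently appended)
segment in `A j` is strictly less than `j`.  Then `[b, j]` overlaps strictly
fewer than `d` segments of `A j`. -/
theorem stmt8 (d b j : ℕ) (A : ℕ → List (ℕ × ℕ)) (y : ℕ → ℕ)
    (hpart : ∀ t, Partitions (A t) 1 (y t)) (hy : ∀ t, y t ≤ t)
    (hpre : ∀ t t', t ≤ t' → A t <+: A t')
    (happ : ∀ t, ∀ p ∈ A t, p ∈ A p.2)
    (hd : 1 < d) (hb1 : 1 ≤ b) (hbj : b ≤ j)
    (hlast : ∀ p ∈ A j, p.2 < j)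
    (htrig : ∀ j', b ≤ j' → j' < j → overlapCnt b j' (A j') ≠ d) :
    overlapCnt b j (A j) < d :=
  stmt8_general d b j A y hpart hpre happ hd hlast htrig
end

section
/- Let RS[c] and RS[c'] be two lists of pairwise disjoint integer intervals, each partitioning [1, m], sorted by left endpoint. Let [b, e] be the ℓ-th interval of RS[c] and suppose [b, e] overlaps at most 2 intervals of RS[c']. If ι is the index of the interval of RS[c'] containing e, and j ∈ [b, e], then the interval of RS[c'] containing j is either the ι-th or the (ι-1)-th interval of RS[c']. -/
lemma part_le : ∀ {L : List (ℕ×ℕ)} {x y : ℕ}, Partitions L x y →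
    ∀ i (hi : i < L.length), x ≤ L[i].1 ∧ L[i].1 ≤ L[i].2 := by
  intro L
  induction L with
  | nil => intro x y h i hi; simp at hi
  | cons hd t ih =>
    obtain ⟨hb, he⟩ := hd
    intro x y h i hi
    obtain ⟨hx, hbe, ht⟩ := h
    match i with
    | 0 => simpa [hx] using hbe
    | (i+1) =>
      have := ih ht i (by simpa using hi)
      refine ⟨le_trans ?_ this.1, this.2⟩
      omega

lemma part_mono : ∀ {L : List (ℕ×ℕ)} {x y : ℕ}, Partitions L x y →
    ∀ i i' (hi : i < L.length) (hi' : i' < L.length), i < i' → L[i].2 < L[i'].1 := by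
  intro L
  induction L with
  | nil => intro x y h i i' hi; simp at hi
  | cons hd t ih =>
    obtain ⟨hb, he⟩ := hd
    intro x y h i i' hi hi' hlt
    obtain ⟨hx, hbe, ht⟩ := h
    match i, i' with
    | 0, (i'+1) =>
      have := part_le ht i' (by simpa using hi')
      simp only [List.getElem_cons_zero, List.getElem_cons_succ]
      omega
    | (i+1), (i'+1) =>
      exact ih ht i i' (by simpa using hi) (by simpa using hi') (by omega)

lemma filter_key {α : Type*} (L : List α) (p : α → Bool) (i : ℕ) (hi : i < L.length)
    (hp : p L[i] = true) :
    ((L.drop (i+1)).filter p).length + 1 ≤ (L.filter p).length := by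
  conv_rhs => rw [← List.take_append_drop (i+1) L]
  rw [List.filter_append, List.length_append]
  have hmem : L[i] ∈ (L.take (i+1)).filter p := by
    rw [List.mem_filter]
    refine ⟨?_, hp⟩
    have h1 : i < (L.take (i+1)).length := by simp [List.length_take]; omega
    have h2 : (L.take (i+1))[i] = L[i] := List.getElem_take ..
    rw [← h2]; exact List.getElem_mem _
  have := List.length_pos_iff.mpr (List.ne_nil_of_mem hmem)
  omega

lemma three_le_filter {α : Type*} (L : List α) (p : α → Bool) (i1 i2 i3 : ℕ)
    (h12 : i1 < i2) (h23 : i2 < i3) (h3 : i3 < L.length)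
    (hp1 : p L[i1] = true) (hp2 : p L[i2] = true) (hp3 : p L[i3] = true) :
    3 ≤ (L.filter p).length := by
  have h1 : i1 < L.length := by omega
  have h2 : i2 < L.length := by omega
  have k1 := filter_key L p i1 h1 hp1
  set D1 := L.drop (i1+1) with hD1
  have hlen1 : D1.length = L.length - (i1+1) := by simp [hD1]
  have hd1 : i2 - (i1+1) < D1.length := by omega
  have hget1 : D1[i2 - (i1+1)] = L[i2] := by
    simp only [hD1, List.getElem_drop]
    congr 1; omega
  have k2 := filter_key D1 p (i2 - (i1+1)) hd1 (by rw [hget1]; exact hp2)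
  set D2 := D1.drop (i2 - (i1+1) + 1) with hD2
  have hD2' : D2 = L.drop (i2 + 1) := by
    rw [hD2, hD1, List.drop_drop]; congr 1; omega
  have hd2 : i3 - (i2+1) < D2.length := by
    rw [hD2']; simp; omega
  have hget2 : D2[i3 - (i2+1)] = L[i3] := by
    simp only [hD2', List.getElem_drop]
    congr 1; omega
  have k3 := filter_key D2 p (i3 - (i2+1)) hd2 (by rw [hget2]; exact hp3)
  omega

/-- Let `RSc` and `RSc'` be sorted lists of disjoint intervals each partitioning
`[1, m]`, let `[b, e]` be the `ℓ`-th interval of `RSc`, and suppose `[b, e]`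
overlaps at most 2 intervals of `RSc'`.  If `ι` is the index of the interval of
`RSc'` containing `e` and `j ∈ [b, e]` lies in the `k`-th interval of `RSc'`,
then `k = ι` or `k = ι - 1`. -/
theorem stmt15 (m : ℕ) (RSc RSc' : List (ℕ × ℕ))
    (hc : Partitions RSc 1 m) (hc' : Partitions RSc' 1 m)
    (ℓ : ℕ) (hℓ : ℓ < RSc.length) (b e : ℕ) (hbe : RSc.get ⟨ℓ, hℓ⟩ = (b, e))
    (hov : overlapCnt b e RSc' ≤ 2)
    (ι : ℕ) (hι : ι < RSc'.length)
    (he : (RSc'.get ⟨ι, hι⟩).1 ≤ e ∧ e ≤ (RSc'.get ⟨ι, hι⟩).2)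
    (j k : ℕ) (hk : k < RSc'.length)
    (hjb : b ≤ j) (hje : j ≤ e)
    (hjk : (RSc'.get ⟨k, hk⟩).1 ≤ j ∧ j ≤ (RSc'.get ⟨k, hk⟩).2) :
    k = ι ∨ k + 1 = ι := by
  simp only [List.get_eq_getElem] at he hjk
  -- k ≤ ι
  have hkι : k ≤ ι := by
    by_contra h
    have := part_mono hc' ι k hι hk (by omega)
    omega
  by_contra hcon
  push_neg at hcon
  have hks : k + 2 ≤ ι := by omega
  -- the three intervals k, k+1, ι all overlap [b, e]
  set p : ℕ × ℕ → Bool := fun q => decide (q.1 ≤ e ∧ b ≤ q.2) with hp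
  have hk1 : k + 1 < RSc'.length := by omega
  have hpk : p RSc'[k] = true := by
    simp only [hp, decide_eq_true_eq]
    exact ⟨le_trans hjk.1 hje, le_trans hjb hjk.2⟩
  have hpι : p RSc'[ι] = true := by
    simp only [hp, decide_eq_true_eq]
    exact ⟨he.1, le_trans (le_trans hjb hje) he.2⟩
  have hm1 := part_mono hc' k (k+1) hk hk1 (by omega)
  have hm2 := part_mono hc' (k+1) ι hk1 hι (by omega)
  have hle := part_le hc' (k+1) hk1
  have hpk1 : p RSc'[k+1] = true := by
    simp only [hp, decide_eq_true_eq]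
    constructor
    · omega
    · omega
  have h3 := three_le_filter RSc' p k (k+1) ι (by omega) (by omega) hι hpk hpk1 hpι
  have : overlapCnt b e RSc' = (RSc'.filter p).length := rfl
  omega
end
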